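/- The bracket on R^5 with coordinates (h, e, f, y₁, y₂) defined by {h,e} = 2e, {h,f} = -2f, {e,f} = h, {h,y₁} = y₁, {h,y₂} = -y₂, {e,y₂} = y₁, {f,y₁} = y₂, {y₁,y₂} = h² + 4ef (all other brackets of coordinates zero, extended by skew-symmetry and the Leibniz rule) satisfies the Jacobi identity, hence defines a Poisson structure on R^5. -/

import Mathlib

set_option maxHeartbeats 1000000


/-- Partial derivative `∂f/∂x_i` on `ℝ^5`. -/
noncomputable def pd (f : (Fin 5 → ℝ) → ℝ) (i : Fin 5) (p : Fin 5 → ℝ) : ℝ :=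
  fderiv ℝ f p (Pi.single i 1)

/-- The structure matrix of the bracket on `ℝ^5` with coordinates `(h,e,f,y₁,y₂) =
(p 0, p 1, p 2, p 3, p 4)`: `{h,e}=2e`, `{h,f}=-2f`, `{e,f}=h`, `{h,y₁}=y₁`,
`{h,y₂}=-y₂`, `{e,y₂}=y₁`, `{f,y₁}=y₂`, `{y₁,y₂}=h²+4ef`, other coordinate brackets 0. -/
noncomputable def saffPert (i j : Fin 5) (p : Fin 5 → ℝ) : ℝ :=
  (!![0,        2*p 1,  -2*p 2, p 3,                 -p 4;
      -2*p 1,   0,      p 0,    0,                   p 3;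
      2*p 2,    -p 0,   0,      p 4,                 0;
      -p 3,     0,      -p 4,   0,                   p 0^2 + 4*p 1*p 2;
      p 4,      -p 3,   0,      -(p 0^2 + 4*p 1*p 2), 0] : Matrix (Fin 5) (Fin 5) ℝ) i j

/-- The induced bracket on functions: `{F,G}(p) = Σ_{i,j} π_{ij}(p) ∂_iF(p) ∂_jG(p)`. -/
noncomputable def PB (F G : (Fin 5 → ℝ) → ℝ) (p : Fin 5 → ℝ) : ℝ :=
  ∑ i : Fin 5, ∑ j : Fin 5, saffPert i j p * pd F i p * pd G j p

def kron (l m : Fin 5) : ℝ := if m = l then 1 else 0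

noncomputable def Dpi (j k l : Fin 5) (p : Fin 5 → ℝ) : ℝ :=
  (!![0, 2*kron l 1, -2*kron l 2, kron l 3, -kron l 4;
      -2*kron l 1, 0, kron l 0, 0, kron l 3;
      2*kron l 2, -kron l 0, 0, kron l 4, 0;
      -kron l 3, 0, -kron l 4, 0, 2*p 0*kron l 0 + 4*kron l 1*p 2 + 4*p 1*kron l 2;
      kron l 4, -kron l 3, 0, -(2*p 0*kron l 0 + 4*kron l 1*p 2 + 4*p 1*kron l 2), 0]
    : Matrix (Fin 5) (Fin 5) ℝ) j k

lemma single_apply (l m : Fin 5) : (Pi.single l 1 : Fin 5 → ℝ) m = kron l m := by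
  rw [Pi.single_apply, kron]

lemma pd_of_has {f : (Fin 5 → ℝ) → ℝ} {L : (Fin 5 → ℝ) →L[ℝ] ℝ} {p : Fin 5 → ℝ}
    (h : HasFDerivAt f L p) (i : Fin 5) :
    pd f i p = L (Pi.single i 1) := by unfold pd; rw [h.fderiv]

lemma hproj (m : Fin 5) (p : Fin 5 → ℝ) :
    HasFDerivAt (fun q : Fin 5 → ℝ => q m)
      (ContinuousLinearMap.proj (R := ℝ) (φ := fun _ : Fin 5 => ℝ) m) p :=
  (ContinuousLinearMap.proj (R := ℝ) (φ := fun _ : Fin 5 => ℝ) m).hasFDerivAt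

lemma pd_saffPert (j k l : Fin 5) (p : Fin 5 → ℝ) : pd (saffPert j k) l p = Dpi j k l p := by
  have hq : HasFDerivAt (fun q : Fin 5 → ℝ => q 0^2 + 4*q 1*q 2) _ p :=
    ((((hproj 0 p).mul (hproj 0 p)).add (((hproj 1 p).const_mul 4).mul (hproj 2 p))).congr_of_eventuallyEq
      (Filter.Eventually.of_forall fun q => by simp only [Pi.add_apply, Pi.mul_apply]; ring))
  fin_cases j <;> fin_cases k <;>
    first
      | exact (pd_of_has (hasFDerivAt_const (0:ℝ) p) l).trans (by simp [Dpi])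
      | exact (pd_of_has (hproj 0 p) l).trans (by simp [Dpi, single_apply])
      | exact (pd_of_has ((hproj 0 p).neg) l).trans (by simp [Dpi, single_apply])
      | exact (pd_of_has (hproj 3 p) l).trans (by simp [Dpi, single_apply])
      | exact (pd_of_has ((hproj 3 p).neg) l).trans (by simp [Dpi, single_apply])
      | exact (pd_of_has (hproj 4 p) l).trans (by simp [Dpi, single_apply])
      | exact (pd_of_has ((hproj 4 p).neg) l).trans (by simp [Dpi, single_apply])
      | exact (pd_of_has ((hproj 1 p).const_mul 2) l).trans (by simp [Dpi, single_apply])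
      | exact (pd_of_has ((hproj 2 p).const_mul 2) l).trans (by simp [Dpi, single_apply])
      | exact (pd_of_has ((hproj 1 p).const_mul 2).neg l).trans (by simp [Dpi, single_apply])
      | exact (pd_of_has ((hproj 2 p).const_mul 2).neg l).trans (by simp [Dpi, single_apply])
      | exact (pd_of_has ((hproj 1 p).const_mul (-2)) l).trans (by simp [Dpi, single_apply]; try ring)
      | exact (pd_of_has ((hproj 2 p).const_mul (-2)) l).trans (by simp [Dpi, single_apply]; try ring)
      | exact (pd_of_has hq l).trans (by simp [Dpi, single_apply]; ring)
      | exact (pd_of_has hq.neg l).trans (by simp [Dpi, single_apply]; ring)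

lemma diff_saffPert (j k : Fin 5) : Differentiable ℝ (saffPert j k) := by
  intro p
  have hq : HasFDerivAt (fun q : Fin 5 → ℝ => q 0^2 + 4*q 1*q 2) _ p :=
    ((((hproj 0 p).mul (hproj 0 p)).add (((hproj 1 p).const_mul 4).mul (hproj 2 p))).congr_of_eventuallyEq
      (Filter.Eventually.of_forall fun q => by simp only [Pi.add_apply, Pi.mul_apply]; ring))
  fin_cases j <;> fin_cases k <;>
    first
      | exact (hasFDerivAt_const (0:ℝ) p).differentiableAt
      | exact (hproj 0 p).differentiableAt
      | exact ((hproj 0 p).neg).differentiableAt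
      | exact (hproj 3 p).differentiableAt
      | exact ((hproj 3 p).neg).differentiableAt
      | exact (hproj 4 p).differentiableAt
      | exact ((hproj 4 p).neg).differentiableAt
      | exact ((hproj 1 p).const_mul 2).differentiableAt
      | exact ((hproj 2 p).const_mul 2).differentiableAt
      | exact ((hproj 1 p).const_mul (-2)).differentiableAt
      | exact ((hproj 2 p).const_mul (-2)).differentiableAt
      | exact hq.differentiableAt
      | exact hq.neg.differentiableAt

lemma contDiff_pd {F : (Fin 5 → ℝ) → ℝ} (hF : ContDiff ℝ ⊤ F) (i : Fin 5) :
    ContDiff ℝ ⊤ (pd F i) :=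
  (hF.fderiv_right le_top).clm_apply contDiff_const

lemma pd_sum {ι : Type*} {s : Finset ι} {f : ι → (Fin 5 → ℝ) → ℝ} {p : Fin 5 → ℝ}
    (h : ∀ a ∈ s, DifferentiableAt ℝ (f a) p) (i : Fin 5) :
    pd (fun q => ∑ a ∈ s, f a q) i p = ∑ a ∈ s, pd (f a) i p := by
  unfold pd; rw [fderiv_fun_sum h]; simp

lemma pd_mul {f g : (Fin 5 → ℝ) → ℝ} {p : Fin 5 → ℝ}
    (hf : DifferentiableAt ℝ f p) (hg : DifferentiableAt ℝ g p) (i : Fin 5) :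
    pd (fun q => f q * g q) i p = pd f i p * g p + f p * pd g i p := by
  unfold pd; rw [fderiv_fun_mul hf hg]; simp [smul_eq_mul]; ring

lemma pd_pd_symm {F : (Fin 5 → ℝ) → ℝ} (hF : ContDiff ℝ ⊤ F) (i j : Fin 5) (p : Fin 5 → ℝ) :
    pd (pd F j) i p = pd (pd F i) j p := by
  have hd : Differentiable ℝ F := hF.differentiable (by simp)
  have h2 : DifferentiableAt ℝ (fderiv ℝ F) p :=
    ((hF.fderiv_right (m := ⊤) le_top).differentiable (by simp)) p
  have hsym := second_derivative_symmetric (f' := fderiv ℝ F)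
    (fun y => (hd y).hasFDerivAt) h2.hasFDerivAt
  have key : ∀ v w : Fin 5 → ℝ,
      fderiv ℝ (fun q => fderiv ℝ F q v) p w = fderiv ℝ (fderiv ℝ F) p w v := by
    intro v w
    rw [fderiv_clm_apply h2 (differentiableAt_const v)]
    simp
  have e1 : pd (pd F j) i p
      = fderiv ℝ (fun q => fderiv ℝ F q (Pi.single j 1)) p (Pi.single i 1) := rfl
  have e2 : pd (pd F i) j p
      = fderiv ℝ (fun q => fderiv ℝ F q (Pi.single i 1)) p (Pi.single j 1) := rfl
  rw [e1, e2, key, key, hsym]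

lemma pd_PB {G H : (Fin 5 → ℝ) → ℝ} (hG : ContDiff ℝ ⊤ G) (hH : ContDiff ℝ ⊤ H)
    (i : Fin 5) (p : Fin 5 → ℝ) :
    pd (PB G H) i p = ∑ j : Fin 5, ∑ k : Fin 5,
      (Dpi j k i p * pd G j p * pd H k p
        + saffPert j k p * pd (pd G j) i p * pd H k p
        + saffPert j k p * pd G j p * pd (pd H k) i p) := by
  have dG : ∀ j, Differentiable ℝ (pd G j) := fun j => (contDiff_pd hG j).differentiable (by simp)
  have dH : ∀ k, Differentiable ℝ (pd H k) := fun k => (contDiff_pd hH k).differentiable (by simp)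
  have dprod : ∀ j k : Fin 5, DifferentiableAt ℝ (fun q => saffPert j k q * pd G j q * pd H k q) p :=
    fun j k => ((diff_saffPert j k p).mul (dG j p)).mul (dH k p)
  have e0 : pd (PB G H) i p
      = pd (fun q => ∑ j : Fin 5, ∑ k : Fin 5, saffPert j k q * pd G j q * pd H k q) i p := rfl
  rw [e0, pd_sum (fun j _ => DifferentiableAt.fun_sum fun k _ => dprod j k) i]
  refine Finset.sum_congr rfl fun j _ => ?_
  rw [pd_sum (fun k _ => dprod j k) i]
  refine Finset.sum_congr rfl fun k _ => ?_
  rw [pd_mul (show DifferentiableAt ℝ (fun q => saffPert j k q * pd G j q) p from (diff_saffPert j k p).mul (dG j p)) (dH k p) i,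
      pd_mul (diff_saffPert j k p) (dG j p) i, pd_saffPert]
  ring

lemma sp_0_0 (p : Fin 5 → ℝ) : saffPert 0 0 p = 0 := by simp [saffPert]
lemma dp_0_0 (l : Fin 5) (p : Fin 5 → ℝ) : Dpi 0 0 l p = 0 := by simp [Dpi]
lemma sp_0_1 (p : Fin 5 → ℝ) : saffPert 0 1 p = 2*p 1 := by simp [saffPert]
lemma dp_0_1 (l : Fin 5) (p : Fin 5 → ℝ) : Dpi 0 1 l p = 2*kron l 1 := by simp [Dpi]
lemma sp_0_2 (p : Fin 5 → ℝ) : saffPert 0 2 p = -2*p 2 := by simp [saffPert]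
lemma dp_0_2 (l : Fin 5) (p : Fin 5 → ℝ) : Dpi 0 2 l p = -2*kron l 2 := by simp [Dpi]
lemma sp_0_3 (p : Fin 5 → ℝ) : saffPert 0 3 p = p 3 := by simp [saffPert]
lemma dp_0_3 (l : Fin 5) (p : Fin 5 → ℝ) : Dpi 0 3 l p = kron l 3 := by simp [Dpi]
lemma sp_0_4 (p : Fin 5 → ℝ) : saffPert 0 4 p = -p 4 := by simp [saffPert]
lemma dp_0_4 (l : Fin 5) (p : Fin 5 → ℝ) : Dpi 0 4 l p = -kron l 4 := by simp [Dpi]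
lemma sp_1_0 (p : Fin 5 → ℝ) : saffPert 1 0 p = -2*p 1 := by simp [saffPert]
lemma dp_1_0 (l : Fin 5) (p : Fin 5 → ℝ) : Dpi 1 0 l p = -2*kron l 1 := by simp [Dpi]
lemma sp_1_1 (p : Fin 5 → ℝ) : saffPert 1 1 p = 0 := by simp [saffPert]
lemma dp_1_1 (l : Fin 5) (p : Fin 5 → ℝ) : Dpi 1 1 l p = 0 := by simp [Dpi]
lemma sp_1_2 (p : Fin 5 → ℝ) : saffPert 1 2 p = p 0 := by simp [saffPert]
lemma dp_1_2 (l : Fin 5) (p : Fin 5 → ℝ) : Dpi 1 2 l p = kron l 0 := by simp [Dpi]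
lemma sp_1_3 (p : Fin 5 → ℝ) : saffPert 1 3 p = 0 := by simp [saffPert]
lemma dp_1_3 (l : Fin 5) (p : Fin 5 → ℝ) : Dpi 1 3 l p = 0 := by simp [Dpi]
lemma sp_1_4 (p : Fin 5 → ℝ) : saffPert 1 4 p = p 3 := by simp [saffPert]
lemma dp_1_4 (l : Fin 5) (p : Fin 5 → ℝ) : Dpi 1 4 l p = kron l 3 := by simp [Dpi]
lemma sp_2_0 (p : Fin 5 → ℝ) : saffPert 2 0 p = 2*p 2 := by simp [saffPert]
lemma dp_2_0 (l : Fin 5) (p : Fin 5 → ℝ) : Dpi 2 0 l p = 2*kron l 2 := by simp [Dpi]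
lemma sp_2_1 (p : Fin 5 → ℝ) : saffPert 2 1 p = -p 0 := by simp [saffPert]
lemma dp_2_1 (l : Fin 5) (p : Fin 5 → ℝ) : Dpi 2 1 l p = -kron l 0 := by simp [Dpi]
lemma sp_2_2 (p : Fin 5 → ℝ) : saffPert 2 2 p = 0 := by simp [saffPert]
lemma dp_2_2 (l : Fin 5) (p : Fin 5 → ℝ) : Dpi 2 2 l p = 0 := by simp [Dpi]
lemma sp_2_3 (p : Fin 5 → ℝ) : saffPert 2 3 p = p 4 := by simp [saffPert]
lemma dp_2_3 (l : Fin 5) (p : Fin 5 → ℝ) : Dpi 2 3 l p = kron l 4 := by simp [Dpi]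
lemma sp_2_4 (p : Fin 5 → ℝ) : saffPert 2 4 p = 0 := by simp [saffPert]
lemma dp_2_4 (l : Fin 5) (p : Fin 5 → ℝ) : Dpi 2 4 l p = 0 := by simp [Dpi]
lemma sp_3_0 (p : Fin 5 → ℝ) : saffPert 3 0 p = -p 3 := by simp [saffPert]
lemma dp_3_0 (l : Fin 5) (p : Fin 5 → ℝ) : Dpi 3 0 l p = -kron l 3 := by simp [Dpi]
lemma sp_3_1 (p : Fin 5 → ℝ) : saffPert 3 1 p = 0 := by simp [saffPert]
lemma dp_3_1 (l : Fin 5) (p : Fin 5 → ℝ) : Dpi 3 1 l p = 0 := by simp [Dpi]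
lemma sp_3_2 (p : Fin 5 → ℝ) : saffPert 3 2 p = -p 4 := by simp [saffPert]
lemma dp_3_2 (l : Fin 5) (p : Fin 5 → ℝ) : Dpi 3 2 l p = -kron l 4 := by simp [Dpi]
lemma sp_3_3 (p : Fin 5 → ℝ) : saffPert 3 3 p = 0 := by simp [saffPert]
lemma dp_3_3 (l : Fin 5) (p : Fin 5 → ℝ) : Dpi 3 3 l p = 0 := by simp [Dpi]
lemma sp_3_4 (p : Fin 5 → ℝ) : saffPert 3 4 p = p 0^2 + 4*p 1*p 2 := by simp [saffPert]
lemma dp_3_4 (l : Fin 5) (p : Fin 5 → ℝ) : Dpi 3 4 l p = 2*p 0*kron l 0 + 4*kron l 1*p 2 + 4*p 1*kron l 2 := by simp [Dpi]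
lemma sp_4_0 (p : Fin 5 → ℝ) : saffPert 4 0 p = p 4 := by simp [saffPert]
lemma dp_4_0 (l : Fin 5) (p : Fin 5 → ℝ) : Dpi 4 0 l p = kron l 4 := by simp [Dpi]
lemma sp_4_1 (p : Fin 5 → ℝ) : saffPert 4 1 p = -p 3 := by simp [saffPert]
lemma dp_4_1 (l : Fin 5) (p : Fin 5 → ℝ) : Dpi 4 1 l p = -kron l 3 := by simp [Dpi]
lemma sp_4_2 (p : Fin 5 → ℝ) : saffPert 4 2 p = 0 := by simp [saffPert]
lemma dp_4_2 (l : Fin 5) (p : Fin 5 → ℝ) : Dpi 4 2 l p = 0 := by simp [Dpi]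
lemma sp_4_3 (p : Fin 5 → ℝ) : saffPert 4 3 p = -(p 0^2 + 4*p 1*p 2) := by simp [saffPert]
lemma dp_4_3 (l : Fin 5) (p : Fin 5 → ℝ) : Dpi 4 3 l p = -(2*p 0*kron l 0 + 4*kron l 1*p 2 + 4*p 1*kron l 2) := by simp [Dpi]
lemma sp_4_4 (p : Fin 5 → ℝ) : saffPert 4 4 p = 0 := by simp [saffPert]
lemma dp_4_4 (l : Fin 5) (p : Fin 5 → ℝ) : Dpi 4 4 l p = 0 := by simp [Dpi]
lemma kr_0_0 : kron 0 0 = 1 := by simp [kron]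
lemma kr_0_1 : kron 0 1 = 0 := by simp [kron]
lemma kr_0_2 : kron 0 2 = 0 := by simp [kron]
lemma kr_0_3 : kron 0 3 = 0 := by simp [kron]
lemma kr_0_4 : kron 0 4 = 0 := by simp [kron]
lemma kr_1_0 : kron 1 0 = 0 := by simp [kron]
lemma kr_1_1 : kron 1 1 = 1 := by simp [kron]
lemma kr_1_2 : kron 1 2 = 0 := by simp [kron]
lemma kr_1_3 : kron 1 3 = 0 := by simp [kron]
lemma kr_1_4 : kron 1 4 = 0 := by simp [kron]
lemma kr_2_0 : kron 2 0 = 0 := by simp [kron]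
lemma kr_2_1 : kron 2 1 = 0 := by simp [kron]
lemma kr_2_2 : kron 2 2 = 1 := by simp [kron]
lemma kr_2_3 : kron 2 3 = 0 := by simp [kron]
lemma kr_2_4 : kron 2 4 = 0 := by simp [kron]
lemma kr_3_0 : kron 3 0 = 0 := by simp [kron]
lemma kr_3_1 : kron 3 1 = 0 := by simp [kron]
lemma kr_3_2 : kron 3 2 = 0 := by simp [kron]
lemma kr_3_3 : kron 3 3 = 1 := by simp [kron]
lemma kr_3_4 : kron 3 4 = 0 := by simp [kron]
lemma kr_4_0 : kron 4 0 = 0 := by simp [kron]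
lemma kr_4_1 : kron 4 1 = 0 := by simp [kron]
lemma kr_4_2 : kron 4 2 = 0 := by simp [kron]
lemma kr_4_3 : kron 4 3 = 0 := by simp [kron]
lemma kr_4_4 : kron 4 4 = 1 := by simp [kron]
lemma fm0 (h : 0 < 5) : (⟨0, h⟩ : Fin 5) = 0 := rfl
lemma fm1 (h : 1 < 5) : (⟨1, h⟩ : Fin 5) = 1 := rfl
lemma fm2 (h : 2 < 5) : (⟨2, h⟩ : Fin 5) = 2 := rfl
lemma fm3 (h : 3 < 5) : (⟨3, h⟩ : Fin 5) = 3 := rfl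
lemma fm4 (h : 4 < 5) : (⟨4, h⟩ : Fin 5) = 4 := rfl

lemma saffPert_skew (p : Fin 5 → ℝ) : ∀ i j, saffPert j i p = -saffPert i j p := by
  intro i j
  fin_cases i <;> fin_cases j <;> simp only [fm0, fm1, fm2, fm3, fm4, sp_0_0, sp_0_1, sp_0_2, sp_0_3, sp_0_4, sp_1_0, sp_1_1, sp_1_2, sp_1_3, sp_1_4, sp_2_0, sp_2_1, sp_2_2, sp_2_3, sp_2_4, sp_3_0, sp_3_1, sp_3_2, sp_3_3, sp_3_4, sp_4_0, sp_4_1, sp_4_2, sp_4_3, sp_4_4] <;> ring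

lemma jacobiPi (p : Fin 5 → ℝ) : ∀ l j k,
    (∑ i : Fin 5, (saffPert l i p * Dpi j k i p + saffPert j i p * Dpi k l i p
      + saffPert k i p * Dpi l j i p)) = 0 := by
  intro l j k
  fin_cases l <;> fin_cases j <;> fin_cases k <;>
    · simp only [fm0, fm1, fm2, fm3, fm4, Fin.sum_univ_five, sp_0_0, sp_0_1, sp_0_2, sp_0_3, sp_0_4, sp_1_0, sp_1_1, sp_1_2, sp_1_3, sp_1_4, sp_2_0, sp_2_1, sp_2_2, sp_2_3, sp_2_4, sp_3_0, sp_3_1, sp_3_2, sp_3_3, sp_3_4, sp_4_0, sp_4_1, sp_4_2, sp_4_3, sp_4_4, dp_0_0, dp_0_1, dp_0_2, dp_0_3, dp_0_4, dp_1_0, dp_1_1, dp_1_2, dp_1_3, dp_1_4, dp_2_0, dp_2_1, dp_2_2, dp_2_3, dp_2_4, dp_3_0, dp_3_1, dp_3_2, dp_3_3, dp_3_4, dp_4_0, dp_4_1, dp_4_2, dp_4_3, dp_4_4, kr_0_0, kr_0_1, kr_0_2, kr_0_3, kr_0_4, kr_1_0, kr_1_1, kr_1_2, kr_1_3, kr_1_4,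 kr_2_0, kr_2_1, kr_2_2, kr_2_3, kr_2_4, kr_3_0, kr_3_1, kr_3_2, kr_3_3, kr_3_4, kr_4_0, kr_4_1, kr_4_2, kr_4_3, kr_4_4]
      ring


abbrev I4 := Fin 5 × Fin 5 × Fin 5 × Fin 5

lemma sum4_flat (f : Fin 5 → Fin 5 → Fin 5 → Fin 5 → ℝ) :
    (∑ l : Fin 5, ∑ i : Fin 5, ∑ j : Fin 5, ∑ k : Fin 5, f l i j k)
      = ∑ x : I4, f x.1 x.2.1 x.2.2.1 x.2.2.2 := by
  simp [Fintype.sum_prod_type]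

def eA : I4 ≃ I4 where
  toFun x := (x.2.2.1, x.2.1, x.2.2.2, x.1)
  invFun x := (x.2.2.2, x.2.1, x.1, x.2.2.1)
  left_inv := fun ⟨a,b,c,d⟩ => rfl
  right_inv := fun ⟨a,b,c,d⟩ => rfl

def eB : I4 ≃ I4 where
  toFun x := (x.2.2.2, x.2.1, x.1, x.2.2.1)
  invFun x := (x.2.2.1, x.2.1, x.2.2.2, x.1)
  left_inv := fun ⟨a,b,c,d⟩ => rfl
  right_inv := fun ⟨a,b,c,d⟩ => rfl

def eC : I4 ≃ I4 where
  toFun x := (x.2.2.2, x.2.2.1, x.1, x.2.1)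
  invFun x := (x.2.2.1, x.2.2.2, x.2.1, x.1)
  left_inv := fun ⟨a,b,c,d⟩ => rfl
  right_inv := fun ⟨a,b,c,d⟩ => rfl

lemma permA (g : Fin 5 → Fin 5 → Fin 5 → Fin 5 → ℝ) :
    (∑ l : Fin 5, ∑ i : Fin 5, ∑ j : Fin 5, ∑ k : Fin 5, g l i j k)
      = ∑ l : Fin 5, ∑ i : Fin 5, ∑ j : Fin 5, ∑ k : Fin 5, g j i k l := by
  rw [sum4_flat g, sum4_flat (fun l i j k => g j i k l)]
  exact (Equiv.sum_comp eA (fun x : I4 => g x.1 x.2.1 x.2.2.1 x.2.2.2)).symm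

lemma permB (g : Fin 5 → Fin 5 → Fin 5 → Fin 5 → ℝ) :
    (∑ l : Fin 5, ∑ i : Fin 5, ∑ j : Fin 5, ∑ k : Fin 5, g l i j k)
      = ∑ l : Fin 5, ∑ i : Fin 5, ∑ j : Fin 5, ∑ k : Fin 5, g k i l j := by
  rw [sum4_flat g, sum4_flat (fun l i j k => g k i l j)]
  exact (Equiv.sum_comp eB (fun x : I4 => g x.1 x.2.1 x.2.2.1 x.2.2.2)).symm

lemma permC (g : Fin 5 → Fin 5 → Fin 5 → Fin 5 → ℝ) :
    (∑ l : Fin 5, ∑ i : Fin 5, ∑ j : Fin 5, ∑ k : Fin 5, g l i j k)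
      = ∑ l : Fin 5, ∑ i : Fin 5, ∑ j : Fin 5, ∑ k : Fin 5, g k j l i := by
  rw [sum4_flat g, sum4_flat (fun l i j k => g k j l i)]
  exact (Equiv.sum_comp eC (fun x : I4 => g x.1 x.2.1 x.2.2.1 x.2.2.2)).symm

lemma sum_rot3 (g : Fin 5 → Fin 5 → Fin 5 → ℝ) :
    (∑ i : Fin 5, ∑ j : Fin 5, ∑ k : Fin 5, g i j k)
      = ∑ j : Fin 5, ∑ k : Fin 5, ∑ i : Fin 5, g i j k := by
  rw [Finset.sum_comm]
  exact Finset.sum_congr rfl fun j _ => Finset.sum_comm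

lemma cancel2 (π B : Fin 5 → Fin 5 → ℝ) (u v : Fin 5 → ℝ)
    (hπ : ∀ i j, π j i = -π i j) (hB : ∀ i j, B i j = B j i) :
    (∑ l : Fin 5, ∑ i : Fin 5, ∑ j : Fin 5, ∑ k : Fin 5, π l i * u l * (π j k * B j i * v k))
      + (∑ l : Fin 5, ∑ i : Fin 5, ∑ j : Fin 5, ∑ k : Fin 5, π l i * v l * (π j k * u j * B k i)) = 0 := by
  rw [permC (fun l i j k => π l i * v l * (π j k * u j * B k i))]
  simp only [← Finset.sum_add_distrib]
  refine Finset.sum_eq_zero fun l _ => Finset.sum_eq_zero fun i _ =>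
    Finset.sum_eq_zero fun j _ => Finset.sum_eq_zero fun k _ => ?_
  rw [hπ j k, hB i j]; ring

lemma cancelD (π : Fin 5 → Fin 5 → ℝ) (D : Fin 5 → Fin 5 → Fin 5 → ℝ) (u v w : Fin 5 → ℝ)
    (hJ : ∀ l j k, (∑ i : Fin 5, (π l i * D j k i + π j i * D k l i + π k i * D l j i)) = 0) :
    (∑ l : Fin 5, ∑ i : Fin 5, ∑ j : Fin 5, ∑ k : Fin 5, π l i * u l * (D j k i * v j * w k))
      + (∑ l : Fin 5, ∑ i : Fin 5, ∑ j : Fin 5, ∑ k : Fin 5, π l i * v l * (D j k i * w j * u k))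
      + (∑ l : Fin 5, ∑ i : Fin 5, ∑ j : Fin 5, ∑ k : Fin 5, π l i * w l * (D j k i * u j * v k)) = 0 := by
  rw [permA (fun l i j k => π l i * v l * (D j k i * w j * u k)),
      permB (fun l i j k => π l i * w l * (D j k i * u j * v k))]
  simp only [← Finset.sum_add_distrib]
  refine Finset.sum_eq_zero fun l _ => ?_
  rw [sum_rot3]
  refine Finset.sum_eq_zero fun j _ => Finset.sum_eq_zero fun k _ => ?_
  calc (∑ i : Fin 5, (π l i * u l * (D j k i * v j * w k) + π j i * v j * (D k l i * w k * u l)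
          + π k i * w k * (D l j i * u l * v j)))
      = ∑ i : Fin 5, (u l * v j * w k)
          * (π l i * D j k i + π j i * D k l i + π k i * D l j i) :=
        Finset.sum_congr rfl fun i _ => by ring
    _ = (u l * v j * w k) * ∑ i : Fin 5, (π l i * D j k i + π j i * D k l i + π k i * D l j i) :=
        (Finset.mul_sum _ _ _).symm
    _ = 0 := by rw [hJ l j k, mul_zero]


lemma jacobi_general (π B A C : Fin 5 → Fin 5 → ℝ) (D : Fin 5 → Fin 5 → Fin 5 → ℝ)
    (a b c : Fin 5 → ℝ)
    (hπ : ∀ i j, π j i = -π i j)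
    (hA : ∀ i j, A i j = A j i) (hB : ∀ i j, B i j = B j i) (hC : ∀ i j, C i j = C j i)
    (hJ : ∀ l j k, (∑ i : Fin 5, (π l i * D j k i + π j i * D k l i + π k i * D l j i)) = 0) :
    (∑ l : Fin 5, ∑ i : Fin 5, π l i * a l * (∑ j : Fin 5, ∑ k : Fin 5,
        (D j k i * b j * c k + π j k * B j i * c k + π j k * b j * C k i)))
    + (∑ l : Fin 5, ∑ i : Fin 5, π l i * b l * (∑ j : Fin 5, ∑ k : Fin 5,
        (D j k i * c j * a k + π j k * C j i * a k + π j k * c j * A k i)))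
    + (∑ l : Fin 5, ∑ i : Fin 5, π l i * c l * (∑ j : Fin 5, ∑ k : Fin 5,
        (D j k i * a j * b k + π j k * A j i * b k + π j k * a j * B k i))) = 0 := by
  simp only [Finset.mul_sum, mul_add, Finset.sum_add_distrib]
  linear_combination cancelD π D a b c hJ + cancel2 π B a c hπ hB
    + cancel2 π C b a hπ hC + cancel2 π A c b hπ hA

/-- The perturbed `saff(2)` bracket on `ℝ^5` satisfies the Jacobi identity, hence
defines a Poisson structure. -/
theorem saff2_perturbed_is_poisson :
    ∀ F G H : (Fin 5 → ℝ) → ℝ,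
      ContDiff ℝ ⊤ F → ContDiff ℝ ⊤ G → ContDiff ℝ ⊤ H →
        ∀ p : Fin 5 → ℝ,
          PB F (PB G H) p + PB G (PB H F) p + PB H (PB F G) p = 0 := by
  intro F G H hF hG hH p
  have e1 := pd_PB hG hH
  have e2 := pd_PB hH hF
  have e3 := pd_PB hF hG
  have o1 : PB F (PB G H) p
      = ∑ l : Fin 5, ∑ i : Fin 5, saffPert l i p * pd F l p * pd (PB G H) i p := rfl
  have o2 : PB G (PB H F) p
      = ∑ l : Fin 5, ∑ i : Fin 5, saffPert l i p * pd G l p * pd (PB H F) i p := rfl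
  have o3 : PB H (PB F G) p
      = ∑ l : Fin 5, ∑ i : Fin 5, saffPert l i p * pd H l p * pd (PB F G) i p := rfl
  rw [o1, o2, o3]
  simp only [e1, e2, e3]
  exact jacobi_general (fun i j => saffPert i j p)
    (fun x y => pd (pd G x) y p) (fun x y => pd (pd F x) y p) (fun x y => pd (pd H x) y p)
    (fun j k i => Dpi j k i p)
    (fun i => pd F i p) (fun i => pd G i p) (fun i => pd H i p)
    (saffPert_skew p)
    (fun i j => pd_pd_symm hF j i p)
    (fun i j => pd_pd_symm hG j i p)
    (fun i j => pd_pd_symm hH j i p)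
    (jacobiPi p)
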